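/- Hopf-Lax subsolution with countably many base points: Let X be a metric space of finite diameter with finite Borel measure m, let f be bounded continuous on X, let {x_i} be a sequence in X, and define Q_t^n f(x) = min_{1 ≤ i ≤ n} [f(x_i) + d²(x, x_i)/(2t)] for t > 0. Then Q_t^n f is locally Lipschitz in (0,∞) × X and satisfies (d/dt) Q_t^n f + ½ Lip_a²(Q_t^n f) ≤ 0 at L¹×m-a.e. (t, x), where Lip_a denotes the asymptotic Lipschitz constant. -/

import Mathlib

open MeasureTheory Filter Metric Set
open scoped ENNReal Topology NNReal

/-- The asymptotic Lipschitz constant `Lip_a f (x) = inf_{r>0} Lip(f|_{B_r(x)})`. -/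
noncomputable def asympLip {X : Type*} [MetricSpace X] (f : X → ℝ) (x : X) : ℝ :=
  sInf {K : ℝ | 0 ≤ K ∧ ∃ r > (0:ℝ), LipschitzOnWith (Real.toNNReal K) f (Metric.ball x r)}

/-- The discrete Hopf–Lax function
`Q_t^n f (x) = min_{1 ≤ i ≤ n} [f(x_i) + d²(x,x_i)/(2t)]`. -/
noncomputable def QHL {X : Type*} [MetricSpace X] (f : X → ℝ) (xi : ℕ → X) (n : ℕ)
    (t : ℝ) (x : X) : ℝ :=
  ⨅ i : Fin n, (f (xi i) + dist x (xi i) ^ 2 / (2 * t))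

/-!
For fixed `x`, two branches `a i + d(x, c i)²/(2t)` with different distances to `x` cross at most
once in `t`, so for a.e. `(t, x)` all branches realising the minimum have the same distance `d` and
the same value `a`. Near such a point the minimum is `a + d²/(2s)` in time, with derivative
`-d²/(2t²)`, and in space a minimum of branches that are `(d + r)/t`-Lipschitz on `B(x, r)`, so
`Lip_a ≤ d/t` and `∂ₜQ + ½ Lip_a² ≤ -d²/(2t²) + d²/(2t²) = 0`.
-/

theorem LipschitzOnWith.uncurry {α β γ : Type*} [PseudoEMetricSpace α] [PseudoEMetricSpace β]
    [PseudoEMetricSpace γ] {f : α → β → γ} {s : Set α} {t : Set β} {Kα Kβ : ℝ≥0}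
    (hα : ∀ b ∈ t, LipschitzOnWith Kα (fun a => f a b) s)
    (hβ : ∀ a ∈ s, LipschitzOnWith Kβ (f a) t) :
    LipschitzOnWith (Kα + Kβ) (Function.uncurry f) (s ×ˢ t) := by
  rintro ⟨a₁, b₁⟩ ⟨ha₁, hb₁⟩ ⟨a₂, b₂⟩ ⟨ha₂, hb₂⟩
  simp only [Function.uncurry, ENNReal.coe_add, add_mul]
  apply le_trans (edist_triangle _ (f a₂ b₁) _)
  exact add_le_add (le_trans (hα _ hb₁ ha₁ ha₂) <| mul_right_mono <| le_max_left _ _)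
    (le_trans (hβ _ ha₂ hb₁ hb₂) <| mul_right_mono <| le_max_right _ _)

theorem LipschitzOnWith.ciInf {α ι : Type*} [PseudoMetricSpace α] [Finite ι]
    {g : ι → α → ℝ} {s : Set α} {K : ℝ≥0} (hg : ∀ i, LipschitzOnWith K (g i) s) :
    LipschitzOnWith K (fun x => ⨅ i, g i x) s := by
  cases isEmpty_or_nonempty ι
  · simpa only [Real.iInf_of_isEmpty] using (LipschitzWith.const' (0 : ℝ)).lipschitzOnWith
  refine LipschitzOnWith.of_le_add_mul K fun x hx y hy => ?_
  have h : ∀ i, (⨅ j, g j x) - K * dist x y ≤ g i y := fun i => by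
    linarith [ciInf_le (Finite.bddBelow_range (g · x)) i, (hg i).le_add_mul hx hy]
  linarith [le_ciInf h]

theorem iInf_eventuallyEq_iInf_argmin {α ι : Type*} [TopologicalSpace α] [Finite ι]
    [Nonempty ι] {g : ι → α → ℝ} {a : α} (hg : ∀ i, ContinuousAt (g i) a) :
    (fun b => ⨅ i, g i b) =ᶠ[𝓝 a] fun b => ⨅ i : {i // g i a = ⨅ j, g j a}, g i b := by
  obtain ⟨I, hI⟩ := exists_eq_ciInf_of_finite (f := fun i => g i a)
  have : Nonempty {i // g i a = ⨅ j, g j a} := ⟨⟨I, hI⟩⟩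
  have hlt : ∀ᶠ b in 𝓝 a, ∀ i, g i a ≠ ⨅ j, g j a → g I b < g i b := by
    refine eventually_all.2 fun i => ?_
    by_cases hi : g i a = ⨅ j, g j a
    · exact Eventually.of_forall fun _ h => absurd hi h
    · have : g I a < g i a :=
        hI ▸ lt_of_le_of_ne (ciInf_le (Finite.bddBelow_range _) i) (Ne.symm hi)
      exact ((hg I).eventually_lt (hg i) this).mono fun _ hb _ => hb
  filter_upwards [hlt] with b hb
  refine le_antisymm (le_ciInf fun i => ciInf_le (Finite.bddBelow_range _) i.1)
    (le_ciInf fun i => ?_)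
  by_cases hi : g i a = ⨅ j, g j a
  · exact ciInf_le (Finite.bddBelow_range _) (⟨i, hi⟩ : {i // g i a = ⨅ j, g j a})
  · exact (ciInf_le (Finite.bddBelow_range _) (⟨I, hI⟩ : {i // g i a = ⨅ j, g j a})).trans
      (hb i hi).le

section asympLip

variable {X : Type*} [MetricSpace X]

theorem asympLip_nonneg (f : X → ℝ) (x : X) : 0 ≤ asympLip f x :=
  Real.sInf_nonneg fun _ hK => hK.1

theorem asympLip_le {f : X → ℝ} {x : X} {K r : ℝ} (hK : 0 ≤ K) (hr : 0 < r)
    (hf : LipschitzOnWith K.toNNReal f (ball x r)) : asympLip f x ≤ K :=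
  csInf_le ⟨0, fun _ hK => hK.1⟩ ⟨hK, r, hr, hf⟩

theorem Filter.EventuallyEq.asympLip_eq {f g : X → ℝ} {x : X} (h : f =ᶠ[𝓝 x] g) :
    asympLip f x = asympLip g x := by
  have key : ∀ {f g : X → ℝ}, f =ᶠ[𝓝 x] g →
      {K : ℝ | 0 ≤ K ∧ ∃ r > (0:ℝ), LipschitzOnWith K.toNNReal f (ball x r)} ⊆
        {K : ℝ | 0 ≤ K ∧ ∃ r > (0:ℝ), LipschitzOnWith K.toNNReal g (ball x r)} := by
    rintro f g h K ⟨hK, r, hr, hf⟩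
    obtain ⟨ρ, hρ, hfg⟩ := Metric.eventually_nhds_iff_ball.1 h
    have hsub : ball x (min r ρ) ⊆ ball x ρ := ball_subset_ball (min_le_right _ _)
    refine ⟨hK, min r ρ, lt_min hr hρ, fun y hy z hz => ?_⟩
    rw [← hfg y (hsub hy), ← hfg z (hsub hz)]
    exact hf (ball_subset_ball (min_le_left _ _) hy) (ball_subset_ball (min_le_left _ _) hz)
  unfold asympLip
  rw [Subset.antisymm (key h) (key h.symm)]

end asympLip

theorem abs_dist_sq_sub_dist_sq_le {X : Type*} [PseudoMetricSpace X] {x y c : X} {R : ℝ}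
    (hx : dist x c ≤ R) (hy : dist y c ≤ R) :
    |dist x c ^ 2 - dist y c ^ 2| ≤ 2 * R * dist x y := by
  rw [sq_sub_sq, abs_mul, abs_of_nonneg (by positivity)]
  exact mul_le_mul (by linarith) (abs_dist_sub_le _ _ _) (abs_nonneg _)
    (by linarith [dist_nonneg (x := x) (y := c)])

section HopfLax

variable {X ι : Type*} [MetricSpace X]

theorem lipschitzOnWith_add_dist_sq_div (a : ℝ) (c : X) {t R : ℝ} (ht : 0 < t) :
    LipschitzOnWith (R / t).toNNReal (fun y => a + dist y c ^ 2 / (2 * t)) (closedBall c R) := by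
  refine LipschitzOnWith.of_dist_le' fun y hy z hz => ?_
  rw [Real.dist_eq, add_sub_add_left_eq_sub, ← sub_div, abs_div,
    abs_of_pos (by positivity : (0 : ℝ) < 2 * t), div_le_iff₀ (by positivity)]
  calc |dist y c ^ 2 - dist z c ^ 2| ≤ 2 * R * dist y z := abs_dist_sq_sub_dist_sq_le hy hz
    _ = R / t * dist y z * (2 * t) := by field_simp

theorem lipschitzOnWith_add_div_Ici (a D : ℝ) {τ M : ℝ} (hτ : 0 < τ) (hD : |D| ≤ M) :
    LipschitzOnWith (M / (2 * τ ^ 2)).toNNReal (fun t => a + D / (2 * t)) (Ici τ) := by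
  refine LipschitzOnWith.of_dist_le' fun t ht s hs => ?_
  have ht0 : 0 < t := hτ.trans_le ht
  have hs0 : 0 < s := hτ.trans_le hs
  have hts : τ ^ 2 ≤ t * s := by nlinarith [mem_Ici.1 ht, mem_Ici.1 hs]
  rw [Real.dist_eq, Real.dist_eq, add_sub_add_left_eq_sub,
    show D / (2 * t) - D / (2 * s) = D * (s - t) / (2 * (t * s)) by field_simp,
    abs_div, abs_mul, abs_of_pos (by positivity : (0 : ℝ) < 2 * (t * s)), abs_sub_comm]
  calc |D| * |t - s| / (2 * (t * s)) ≤ M * |t - s| / (2 * τ ^ 2) := by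
        gcongr
        exact mul_nonneg ((abs_nonneg D).trans hD) (abs_nonneg _)
    _ = M / (2 * τ ^ 2) * |t - s| := by ring

theorem lipschitzOnWith_add_dist_sq_div_Ici_prod (a : ℝ) (c : X) {τ R : ℝ} (hτ : 0 < τ)
    (hR : 0 ≤ R) :
    LipschitzOnWith ((R ^ 2 / (2 * τ ^ 2)).toNNReal + (R / τ).toNNReal)
      (fun p : ℝ × X => a + dist p.2 c ^ 2 / (2 * p.1)) (Ici τ ×ˢ closedBall c R) := by
  refine LipschitzOnWith.uncurry (f := fun t x => a + dist x c ^ 2 / (2 * t))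
    (fun x hx => ?_) (fun t ht => ?_)
  · refine lipschitzOnWith_add_div_Ici a _ hτ ?_
    rw [abs_of_nonneg (by positivity)]
    exact pow_le_pow_left₀ dist_nonneg hx 2
  · exact (lipschitzOnWith_add_dist_sq_div a c (hτ.trans_le ht)).weaken
      (Real.toNNReal_le_toNNReal (div_le_div_of_nonneg_left hR hτ ht))

theorem hasDerivAt_add_div_two_mul (a D : ℝ) {t : ℝ} (ht : t ≠ 0) :
    HasDerivAt (fun s => a + D / (2 * s)) (-D / (2 * t ^ 2)) t := by
  rw [show (fun s => a + D / (2 * s)) = fun s => a + D / 2 * s⁻¹ by funext s; ring]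
  exact (((hasDerivAt_inv ht).const_mul (D / 2)).const_add a).congr_deriv (by ring)

theorem subsingleton_setOf_add_div_eq {a₁ a₂ D₁ D₂ : ℝ} (hD : D₁ ≠ D₂) :
    {t : ℝ | a₁ + D₁ / (2 * t) = a₂ + D₂ / (2 * t)}.Subsingleton := by
  intro t ht s hs
  have key : ∀ {t}, a₁ + D₁ / (2 * t) = a₂ + D₂ / (2 * t) →
      (D₁ - D₂) / 2 * t⁻¹ = a₂ - a₁ := fun h => by linear_combination h
  exact inv_injective (mul_left_cancel₀ (div_ne_zero (sub_ne_zero.2 hD) two_ne_zero)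
    ((key ht).trans (key hs).symm))

noncomputable def hopfLaxMin (a : ι → ℝ) (c : ι → X) (t : ℝ) (x : X) : ℝ :=
  ⨅ i, (a i + dist x (c i) ^ 2 / (2 * t))

theorem exists_lipschitzOnWith_hopfLaxMin [Finite ι] (a : ι → ℝ) (c : ι → X) {t₀ : ℝ}
    (ht₀ : 0 < t₀) (x₀ : X) :
    ∃ K : ℝ≥0, LipschitzOnWith K (fun p : ℝ × X => hopfLaxMin a c p.1 p.2)
      (ball (t₀, x₀) (t₀ / 2)) := by
  set ε := t₀ / 2 with hε_def
  have hε : 0 < ε := by positivity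
  let K i :=
    ((dist x₀ (c i) + ε) ^ 2 / (2 * ε ^ 2)).toNNReal + ((dist x₀ (c i) + ε) / ε).toNNReal
  refine ⟨⨆ i, K i, LipschitzOnWith.ciInf fun i => ?_⟩
  refine ((lipschitzOnWith_add_dist_sq_div_Ici_prod (a i) (c i) hε (by positivity)).mono ?_)
    |>.weaken (le_ciSup (Finite.bddAbove_range K) i)
  rw [← ball_prod_same]
  refine prod_mono (fun t ht => ?_) (fun x hx => ?_)
  · have := (abs_lt.1 (Real.dist_eq t t₀ ▸ mem_ball.1 ht)).1
    exact mem_Ici.2 (by linarith)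
  · exact mem_closedBall.2 ((dist_triangle _ _ _).trans (by linarith [mem_ball.1 hx]))

def EquidistantTies (a : ι → ℝ) (c : ι → X) (t : ℝ) (x : X) : Prop :=
  ∀ i j, a i + dist x (c i) ^ 2 / (2 * t) = a j + dist x (c j) ^ 2 / (2 * t) →
    dist x (c i) = dist x (c j)

theorem EquidistantTies.dist_eq_and_eq {a : ι → ℝ} {c : ι → X} {t : ℝ} {x : X}
    (h : EquidistantTies a c t x) {i j : ι}
    (hij : a i + dist x (c i) ^ 2 / (2 * t) = a j + dist x (c j) ^ 2 / (2 * t)) :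
    dist x (c i) = dist x (c j) ∧ a i = a j := by
  have hd := h i j hij
  rw [hd] at hij
  exact ⟨hd, by linarith⟩

variable [Finite ι] {a : ι → ℝ} {c : ι → X} {t : ℝ} {x : X}

theorem ae_equidistantTies [MeasurableSpace X] [OpensMeasurableSpace X]
    (a : ι → ℝ) (c : ι → X) (μ : Measure ℝ) [NullSingletonClass μ] [SFinite μ]
    (ν : Measure X) [SFinite ν] : ∀ᵐ p ∂μ.prod ν, EquidistantTies a c p.1 p.2 := by
  have : Countable ι := Finite.to_countable
  simp only [EquidistantTies, ae_all_iff]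
  intro i j
  have hmeas : MeasurableSet {p : ℝ × X | a i + dist p.2 (c i) ^ 2 / (2 * p.1) =
      a j + dist p.2 (c j) ^ 2 / (2 * p.1) → dist p.2 (c i) = dist p.2 (c j)} := by
    measurability
  rw [Measure.ae_prod_iff_ae_ae hmeas]
  refine (Measure.ae_ae_comm hmeas).2 (Eventually.of_forall fun y => ?_)
  by_cases hd : dist y (c i) = dist y (c j)
  · exact Eventually.of_forall fun _ _ => hd
  · have hD : dist y (c i) ^ 2 ≠ dist y (c j) ^ 2 := fun h =>
      hd ((sq_eq_sq₀ dist_nonneg dist_nonneg).1 h)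
    exact measure_mono_null (fun t ht => (Classical.not_imp.1 ht).1)
      ((subsingleton_setOf_add_div_eq (a₁ := a i) (a₂ := a j) hD).measure_zero μ)

theorem EquidistantTies.hasDerivAt_hopfLaxMin (h : EquidistantTies a c t x) (ht : 0 < t) {i : ι}
    (hi : a i + dist x (c i) ^ 2 / (2 * t) = hopfLaxMin a c t x) :
    HasDerivAt (fun s => hopfLaxMin a c s x) (-(dist x (c i) ^ 2) / (2 * t ^ 2)) t := by
  have : Nonempty ι := ⟨i⟩
  have hcont : ∀ j, ContinuousAt (fun s => a j + dist x (c j) ^ 2 / (2 * s)) t := fun j =>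
    continuousAt_const.add (continuousAt_const.div (continuousAt_const.mul continuousAt_id)
      (by positivity))
  have hactive : (fun s => ⨅ j : {j // a j + dist x (c j) ^ 2 / (2 * t) = hopfLaxMin a c t x},
      a j + dist x (c j) ^ 2 / (2 * s)) = fun s => a i + dist x (c i) ^ 2 / (2 * s) := by
    have : Nonempty {j // a j + dist x (c j) ^ 2 / (2 * t) = hopfLaxMin a c t x} :=
      ⟨⟨i, hi⟩⟩
    funext s
    refine (congrArg iInf (funext fun j => ?_)).trans ciInf_const
    obtain ⟨hd, ha⟩ := h.dist_eq_and_eq (j.2.trans hi.symm)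
    rw [hd, ha]
  exact (hasDerivAt_add_div_two_mul _ _ ht.ne').congr_of_eventuallyEq
    ((iInf_eventuallyEq_iInf_argmin hcont).trans hactive.eventuallyEq)

theorem EquidistantTies.asympLip_hopfLaxMin_le (h : EquidistantTies a c t x) (ht : 0 < t) {i : ι}
    (hi : a i + dist x (c i) ^ 2 / (2 * t) = hopfLaxMin a c t x) :
    asympLip (hopfLaxMin a c t) x ≤ dist x (c i) / t := by
  have : Nonempty ι := ⟨i⟩
  have hcont : ∀ j, ContinuousAt (fun y => a j + dist y (c j) ^ 2 / (2 * t)) x := fun j =>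
    continuousAt_const.add (((continuous_id.dist continuous_const).pow 2).continuousAt.div
      continuousAt_const (by positivity))
  have hlip : ∀ r, LipschitzOnWith ((dist x (c i) + r) / t).toNNReal
      (fun y => ⨅ j : {j // a j + dist x (c j) ^ 2 / (2 * t) = hopfLaxMin a c t x},
        a j + dist y (c j) ^ 2 / (2 * t)) (ball x r) := fun r =>
    LipschitzOnWith.ciInf fun j => (lipschitzOnWith_add_dist_sq_div (a j) (c j) ht).mono
      fun y hy => by
        rw [mem_closedBall, ← (h.dist_eq_and_eq (j.2.trans hi.symm)).1]
        linarith [dist_triangle y x (c j), mem_ball.1 hy]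
  change asympLip (fun y => ⨅ j, a j + dist y (c j) ^ 2 / (2 * t)) x ≤ _
  rw [(iInf_eventuallyEq_iInf_argmin hcont).asympLip_eq]
  refine le_of_forall_pos_le_add fun ε hε => ?_
  calc _ ≤ (dist x (c i) + ε * t) / t :=
        asympLip_le (by positivity) (by positivity) (hlip _)
    _ = dist x (c i) / t + ε := by field_simp

theorem EquidistantTies.hopfLaxMin_subsolution [Nonempty ι]
    (h : EquidistantTies a c t x) (ht : 0 < t) :
    HasDerivAt (fun s => hopfLaxMin a c s x) (deriv (fun s => hopfLaxMin a c s x) t) t ∧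
      deriv (fun s => hopfLaxMin a c s x) t +
        (1 / 2) * asympLip (hopfLaxMin a c t) x ^ 2 ≤ 0 := by
  obtain ⟨i, hi⟩ := exists_eq_ciInf_of_finite (f := fun i => a i + dist x (c i) ^ 2 / (2 * t))
  have hderiv := h.hasDerivAt_hopfLaxMin ht hi
  rw [hderiv.deriv]
  refine ⟨hderiv, ?_⟩
  have hLip : asympLip (hopfLaxMin a c t) x ^ 2 ≤ (dist x (c i) / t) ^ 2 :=
    pow_le_pow_left₀ (asympLip_nonneg _ _) (h.asympLip_hopfLaxMin_le ht hi) 2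
  have hzero : -(dist x (c i) ^ 2) / (2 * t ^ 2) + 1 / 2 * (dist x (c i) / t) ^ 2 = 0 := by
    field_simp; ring
  linarith

end HopfLax

theorem stmt18_general {X : Type*} [MetricSpace X] [MeasurableSpace X] [BorelSpace X]
    (m : Measure X) [IsFiniteMeasure m]
    (f : X → ℝ)
    (xi : ℕ → X) (n : ℕ) (hn : 0 < n) :
    (∀ t₀ : ℝ, 0 < t₀ → ∀ x₀ : X, ∃ ε > (0:ℝ), ∃ K : ℝ≥0,
      LipschitzOnWith K (fun p : ℝ × X => QHL f xi n p.1 p.2)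
        (Metric.ball (t₀, x₀) ε ∩ (Set.Ioi (0:ℝ) ×ˢ Set.univ))) ∧
    (∀ᵐ p ∂((volume.restrict (Set.Ioi (0:ℝ))).prod m),
      HasDerivAt (fun s => QHL f xi n s p.2)
        (deriv (fun s => QHL f xi n s p.2) p.1) p.1 ∧
      deriv (fun s => QHL f xi n s p.2) p.1 +
        (1/2) * (asympLip (fun y => QHL f xi n p.1 y) p.2) ^ 2 ≤ 0) := by
  have hQ : QHL f xi n = hopfLaxMin (fun i : Fin n => f (xi i)) (xi ∘ (↑)) := rfl
  have : Nonempty (Fin n) := ⟨⟨0, hn⟩⟩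
  simp only [hQ]
  refine ⟨fun t₀ ht₀ x₀ => ?_, ?_⟩
  · obtain ⟨K, hK⟩ :=
      exists_lipschitzOnWith_hopfLaxMin (fun i : Fin n => f (xi i)) (xi ∘ (↑)) ht₀ x₀
    exact ⟨t₀ / 2, by positivity, K, hK.mono inter_subset_left⟩
  · have hpos : ∀ᵐ p ∂((volume.restrict (Ioi (0:ℝ))).prod m), 0 < p.1 :=
      Measure.quasiMeasurePreserving_fst.ae (ae_restrict_mem measurableSet_Ioi)
    filter_upwards [hpos, ae_equidistantTies (fun i : Fin n => f (xi i)) (xi ∘ (↑)) _ m]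
      with p hp hties
    exact hties.hopfLaxMin_subsolution hp

/-- On a metric space of finite diameter with finite measure, the discrete Hopf–Lax
function is locally Lipschitz on `(0,∞) × X` and is an a.e. subsolution of
`∂_t Q + ½ Lip_a(Q)² ≤ 0`. -/
theorem stmt18 {X : Type*} [MetricSpace X] [MeasurableSpace X] [BorelSpace X]
    (hdiam : Bornology.IsBounded (Set.univ : Set X))
    (m : Measure X) [IsFiniteMeasure m]
    (f : X → ℝ) (hf : Continuous f) (hfb : ∃ C, ∀ x, |f x| ≤ C)
    (xi : ℕ → X) (n : ℕ) (hn : 0 < n) :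
    (∀ t₀ : ℝ, 0 < t₀ → ∀ x₀ : X, ∃ ε > (0:ℝ), ∃ K : ℝ≥0,
      LipschitzOnWith K (fun p : ℝ × X => QHL f xi n p.1 p.2)
        (Metric.ball (t₀, x₀) ε ∩ (Set.Ioi (0:ℝ) ×ˢ Set.univ))) ∧
    (∀ᵐ p ∂((volume.restrict (Set.Ioi (0:ℝ))).prod m),
      HasDerivAt (fun s => QHL f xi n s p.2)
        (deriv (fun s => QHL f xi n s p.2) p.1) p.1 ∧
      deriv (fun s => QHL f xi n s p.2) p.1 +
        (1/2) * (asympLip (fun y => QHL f xi n p.1 y) p.2) ^ 2 ≤ 0) :=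
  stmt18_general m f xi n hn
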